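/- arXiv:1608.06017 — 2 statements merged into one kernel-verified Lean document; each statement's English description precedes it below -/
import Mathlib

section
/- Let n ≥ 5 and suppose y : binom([n],2) → ℤ satisfies y(e₁) + y(e₂) + y(e₃) ≡ 0 (mod 3) for the edges e₁,e₂,e₃ of every triangle of K_n, and gcd of all entries of y equals 1. Then either all entries of y are ≡ 1 (mod 3) or all entries are ≡ 2 (mod 3). -/
/-!
Reduce mod 3. For disjoint edges `ab` and `cd`, adding the triangle sums over `abc` and `abd`
and subtracting those over `acd` and `bcd` leaves `2 (y ab - y cd) ≡ 0`, so `y ab ≡ y cd`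
since 2 is invertible mod 3. With at least five vertices any two edges are disjoint from a
common third edge, so all entries share one residue; it cannot be 0, as 3 would then divide
the gcd.
-/

open Finset

section

variable {α : Type*} [DecidableEq α]

theorem sum_filter_card_eq_two_powerset_triple {M : Type*} [AddCommMonoid M] (f : Finset α → M)
    {a b c : α} (hab : a ≠ b) (hac : a ≠ c) (hbc : b ≠ c) :
    ∑ e ∈ ({a, b, c} : Finset α).powerset.filter (fun e => e.card = 2), f e
      = f {a, b} + f {a, c} + f {b, c} := by
  have hedges : ({a, b, c} : Finset α).powerset.filter (fun e => e.card = 2)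
      = {{a, b}, {a, c}, {b, c}} := by
    rw [← powersetCard_eq_filter, powersetCard_succ_insert (by simp [hab, hac]),
      powersetCard_succ_insert (by simp [hbc]), powersetCard_eq_empty.2 (by simp)]
    ext
    simp only [powersetCard_one, map_singleton, Function.Embedding.coeFn_mk, image_singleton,
      empty_union, map_insert, image_insert, union_insert, singleton_union, mem_insert,
      mem_singleton]
    tauto
  rw [hedges, sum_insert, sum_pair, add_assoc]
  all_goals simp only [ne_eq, mem_insert, mem_singleton, not_or, Finset.ext_iff, not_forall]
  exacts [⟨a, by simp [hab, hac]⟩, ⟨⟨b, by simp [hab.symm, hbc]⟩, ⟨a, by simp [hab, hac]⟩⟩]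

theorem exists_card_two_disjoint [Fintype α] (s : Finset α) (hs : s.card + 2 ≤ Fintype.card α) :
    ∃ g : Finset α, g.card = 2 ∧ Disjoint s g := by
  obtain ⟨g, hg, hcard⟩ := exists_subset_card_eq (s := sᶜ) (n := 2) (by rw [card_compl]; omega)
  exact ⟨g, hcard, subset_compl_iff_disjoint_left.1 hg⟩

def TriangleSumsVanish (z : Finset α → ZMod 3) : Prop :=
  ∀ a b c : α, a ≠ b → a ≠ c → b ≠ c → z {a, b} + z {a, c} + z {b, c} = 0

theorem triangleSumsVanish_intCast {y : Finset α → ℤ}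
    (h : ∀ K : Finset α, K.card = 3 →
      (∑ e ∈ K.powerset.filter (fun e => e.card = 2), y e) % 3 = 0) :
    TriangleSumsVanish (fun e => (y e : ZMod 3)) := by
  intro a b c hab hac hbc
  have hK := h {a, b, c} (card_eq_three.2 ⟨a, b, c, hab, hac, hbc, rfl⟩)
  rw [sum_filter_card_eq_two_powerset_triple y hab hac hbc] at hK
  have := (ZMod.intCast_zmod_eq_zero_iff_dvd _ 3).2 (Int.dvd_of_emod_eq_zero hK)
  push_cast at this
  exact this

namespace TriangleSumsVanish

variable {z : Finset α → ZMod 3}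

theorem eq_of_disjoint (hz : TriangleSumsVanish z) {e f : Finset α} (he : e.card = 2)
    (hf : f.card = 2) (hd : Disjoint e f) : z e = z f := by
  obtain ⟨a, b, hab, rfl⟩ := card_eq_two.1 he
  obtain ⟨c, d, hcd, rfl⟩ := card_eq_two.1 hf
  have hne : ∀ x ∈ ({a, b} : Finset α), ∀ w ∈ ({c, d} : Finset α), x ≠ w :=
    fun x hx w hw hxw => disjoint_left.1 hd hx (hxw ▸ hw)
  have hac := hne a (by simp) c (by simp)
  have had := hne a (by simp) d (by simp)
  have hbc := hne b (by simp) c (by simp)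
  have hbd := hne b (by simp) d (by simp)
  have htwice : 2 * z {a, b} = 2 * z {c, d} := by
    linear_combination hz a b c hab hac hbc + hz a b d hab had hbd
      - hz a c d hac had hcd - hz b c d hbc hbd hcd
  exact mul_left_cancel₀ (by decide) htwice

theorem eq [Fintype α] (hz : TriangleSumsVanish z) (hα : 5 ≤ Fintype.card α) {e f : Finset α}
    (he : e.card = 2) (hf : f.card = 2) : z e = z f := by
  by_cases hd : Disjoint e f
  · exact hz.eq_of_disjoint he hf hd
  have hunion : (e ∪ f).card + 2 ≤ Fintype.card α := by
    have := card_union_add_card_inter e f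
    have := card_pos.2 (not_disjoint_iff_nonempty_inter.1 hd)
    omega
  obtain ⟨g, hg, hdg⟩ := exists_card_two_disjoint _ hunion
  rw [disjoint_union_left] at hdg
  exact (hz.eq_of_disjoint he hg hdg.1).trans (hz.eq_of_disjoint hf hg hdg.2).symm

end TriangleSumsVanish

end

/-- An integer edge-weighting in standard form (gcd of entries 1) whose
triangle sums are all ≡ 0 (mod 3) has all entries ≡ 1 (mod 3) or all
entries ≡ 2 (mod 3). -/
theorem stmt_11 (n : ℕ) (hn : 5 ≤ n) (y : Finset (Fin n) → ℤ)
    (h : ∀ K : Finset (Fin n), K.card = 3 →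
      (∑ e ∈ K.powerset.filter (fun e => e.card = 2), y e) % 3 = 0)
    (hgcd : (Finset.univ.filter (fun e : Finset (Fin n) => e.card = 2)).gcd y = 1) :
    (∀ e : Finset (Fin n), e.card = 2 → y e % 3 = 1) ∨
    (∀ e : Finset (Fin n), e.card = 2 → y e % 3 = 2) := by
  obtain ⟨e₀, -, he₀⟩ :=
    exists_subset_card_eq (s := (univ : Finset (Fin n))) (n := 2) (by simp; omega)
  have hall : ∀ e : Finset (Fin n), e.card = 2 → (y e : ZMod 3) = y e₀ := fun e he =>
    (triangleSumsVanish_intCast h).eq (by simpa using hn) he he₀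
  have hne : (y e₀ : ZMod 3) ≠ 0 := by
    intro h0
    have h3 : (3 : ℤ) ∣ (univ.filter (fun e : Finset (Fin n) => e.card = 2)).gcd y :=
      dvd_gcd fun e he =>
        (ZMod.intCast_zmod_eq_zero_iff_dvd _ 3).1 ((hall e (mem_filter.1 he).2).trans h0)
    rw [hgcd] at h3
    norm_num at h3
  have hmod : ∀ e : Finset (Fin n), e.card = 2 → y e % 3 = ((y e₀ : ZMod 3).val : ℤ) :=
    fun e he => by rw [← hall e he, ZMod.val_intCast]; rfl
  generalize (y e₀ : ZMod 3) = r at hne hmod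
  fin_cases r
  · exact absurd rfl hne
  · exact Or.inl hmod
  · exact Or.inr hmod
end

section
/- Let n be divisible by 4 and let G = C_4 · K_{n/4} be the lexicographic product of a 4-cycle with the complete graph on n/4 vertices (vertex set partitioned into 4 blocks V_1,...,V_4 of size n/4, all edges within each block, and all edges between consecutive blocks V_i, V_{i+1} indices mod 4). Let (A,B) = (V_1 ∪ V_3, V_2 ∪ V_4) and let y be the cut vector y(e) = 2 for edges within A or within B and y(e) = -1 otherwise. Then ⟨y, 1_G⟩ = 2(n²/8 - n/2) - n² /4 = -n < 0. Hence G does not have a fractional triangle decomposition. -/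
/-!
The cut vector `y` of a 2-colouring is nonnegative on every triangle: a triangle is either
monochromatic (weight 6) or splits 2 + 1 (weight 2 - 1 - 1 = 0). Pairing a fractional triangle
decomposition `1_G = ∑ c_K 1_K` with `y` would therefore give `⟨y, 1_G⟩ ≥ 0`. For `C₄ · K_q`
every vertex has `q - 1` neighbours on its own side and `2q` on the other, so each vertex
contributes `2(q - 1) - 2q = -2` to the sum of `y` over ordered adjacent pairs, which is
`2⟨y, 1_G⟩`; hence `⟨y, 1_G⟩ = -n`.
-/

open Finset

section Pairs

variable {V : Type*} [DecidableEq V]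

theorem Finset.pair_eq_pair_iff {a b u v : V} :
    ({a, b} : Finset V) = {u, v} ↔ a = u ∧ b = v ∨ a = v ∧ b = u := by
  rw [← coe_inj, coe_pair, coe_pair, Set.pair_eq_pair_iff]

theorem two_nsmul_sum_eq_sum_sum_ite [Fintype V] {M : Type*} [AddCommMonoid M]
    (r : V → V → Prop) [DecidableRel r] (hr : ∀ u v, r u v → r v u) (G : Finset (Finset V))
    (hG : ∀ e, e ∈ G ↔ ∃ u v, u ≠ v ∧ e = {u, v} ∧ r u v) (f : Finset V → M) :
    2 • ∑ e ∈ G, f e = ∑ u, ∑ v, if u ≠ v ∧ r u v then f {u, v} else 0 := by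
  set S := univ.filter fun p : V × V => p.1 ≠ p.2 ∧ r p.1 p.2
  have hS : ∀ p ∈ S, ({p.1, p.2} : Finset V) ∈ G := fun p hp =>
    (hG _).2 ⟨p.1, p.2, (mem_filter.1 hp).2.1, rfl, (mem_filter.1 hp).2.2⟩
  have hfiber : ∀ e ∈ G, ∑ p ∈ S with {p.1, p.2} = e, f {p.1, p.2} = 2 • f e := by
    intro e he
    obtain ⟨u, v, huv, rfl, hr_uv⟩ := (hG e).1 he
    have hfiber_eq :
        S.filter (fun p => ({p.1, p.2} : Finset V) = {u, v}) = {(u, v), (v, u)} := by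
      ext ⟨a, b⟩
      simp only [S, mem_filter, mem_univ, true_and, Finset.pair_eq_pair_iff, mem_insert,
        mem_singleton, Prod.mk.injEq]
      constructor
      · exact fun h => h.2
      · rintro (⟨rfl, rfl⟩ | ⟨rfl, rfl⟩)
        · exact ⟨⟨huv, hr_uv⟩, by tauto⟩
        · exact ⟨⟨huv.symm, hr _ _ hr_uv⟩, by tauto⟩
    rw [hfiber_eq, sum_pair (by simp [huv]), pair_comm v u, two_nsmul]
  rw [smul_sum, ← sum_congr rfl hfiber, sum_fiberwise_of_maps_to hS, sum_filter,
    Fintype.sum_prod_type]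

theorem sum_powersetCard_two_triple {M : Type*} [AddCommMonoid M] (f : Finset V → M)
    {a b d : V} (hab : a ≠ b) (had : a ≠ d) (hbd : b ≠ d) :
    ∑ e ∈ ({a, b, d} : Finset V).powersetCard 2, f e = f {a, b} + f {b, d} + f {a, d} := by
  have hedges : ({a, b, d} : Finset V).powersetCard 2 = {{a, b}, {b, d}, {a, d}} := by
    rw [powersetCard_succ_insert (by simp [hab, had]), powersetCard_succ_insert (by simp [hbd]),
      powersetCard_eq_empty.2 (by simp)]
    simp [powersetCard_one]
  rw [hedges, sum_insert, sum_pair, add_assoc]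
  · exact ne_of_mem_of_not_mem' (a := b) (by simp) (by simp [hab.symm, hbd])
  · simp only [mem_insert, mem_singleton, not_or]
    exact ⟨ne_of_mem_of_not_mem' (a := a) (by simp) (by simp [hab, had]),
      ne_of_mem_of_not_mem' (a := b) (by simp) (by simp [hab.symm, hbd])⟩

end Pairs

section FractionalDecomposition

variable {V : Type*} [Fintype V] [DecidableEq V]

def IsFractionalTriangleDecomposition (G : Finset (Finset V)) (c : Finset V → ℝ) : Prop :=
  (∀ K, 0 ≤ c K) ∧
    ∀ e : Finset V, e.card = 2 →
      (if e ∈ G then (1 : ℝ) else 0) =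
        ∑ K ∈ univ.filter (fun K : Finset V => K.card = 3), c K * (if e ⊆ K then 1 else 0)

theorem IsFractionalTriangleDecomposition.sum_nonneg {G : Finset (Finset V)} {c : Finset V → ℝ}
    (hc : IsFractionalTriangleDecomposition G c) (hG : ∀ e ∈ G, e.card = 2) {y : Finset V → ℝ}
    (hy : ∀ K : Finset V, K.card = 3 → 0 ≤ ∑ e ∈ K.powersetCard 2, y e) :
    0 ≤ ∑ e ∈ G, y e := by
  set E := univ.filter fun e : Finset V => e.card = 2
  set T := univ.filter fun K : Finset V => K.card = 3
  have hfilter_mem : E.filter (· ∈ G) = G := by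
    ext e
    simpa [E] using fun he => hG e he
  have hfilter_subset : ∀ K, E.filter (· ⊆ K) = K.powersetCard 2 := fun K => by
    ext e
    simp [E, mem_powersetCard, and_comm]
  calc 0 ≤ ∑ K ∈ T, c K * ∑ e ∈ K.powersetCard 2, y e :=
        Finset.sum_nonneg fun K hK => mul_nonneg (hc.1 K) (hy K (mem_filter.1 hK).2)
    _ = ∑ e ∈ E, y e * ∑ K ∈ T, c K * (if e ⊆ K then 1 else 0) := by
        simp_rw [← hfilter_subset, sum_filter, mul_sum]
        rw [sum_comm]
        refine sum_congr rfl fun e _ => sum_congr rfl fun K _ => ?_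
        split_ifs <;> ring
    _ = ∑ e ∈ E, if e ∈ G then y e else 0 := sum_congr rfl fun e he => by
        rw [← hc.2 e (mem_filter.1 he).2, mul_ite, mul_one, mul_zero]
    _ = ∑ e ∈ G, y e := by rw [← sum_filter, hfilter_mem]

end FractionalDecomposition

section Cut

variable {V α : Type*} [DecidableEq V] [DecidableEq α]

noncomputable def cutVector (χ : V → α) (e : Finset V) : ℝ :=
  if ∀ u ∈ e, ∀ v ∈ e, χ u = χ v then 2 else -1

theorem cutVector_pair (χ : V → α) (u v : V) :
    cutVector χ {u, v} = if χ u = χ v then 2 else -1 := by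
  by_cases h : χ u = χ v
  · rw [if_pos h, cutVector, if_pos]
    simp [h]
  · rw [if_neg h, cutVector, if_neg]
    exact fun hall => h (hall u (by simp) v (by simp))

theorem cutVector_triangle_nonneg [Fintype α] (hα : Fintype.card α ≤ 2) (χ : V → α)
    {K : Finset V} (hK : K.card = 3) : 0 ≤ ∑ e ∈ K.powersetCard 2, cutVector χ e := by
  obtain ⟨a, b, d, hab, had, hbd, rfl⟩ := card_eq_three.1 hK
  obtain ⟨i, j, hij, hχ⟩ :=
    Fintype.exists_ne_map_eq_of_card_lt (![χ a, χ b, χ d] : Fin 3 → α)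
      (by rw [Fintype.card_fin]; omega)
  have hmono : χ a = χ b ∨ χ b = χ d ∨ χ a = χ d := by
    fin_cases i <;> fin_cases j <;> simp_all [eq_comm]
  rw [sum_powersetCard_two_triple _ hab had hbd, cutVector_pair, cutVector_pair, cutVector_pair]
  rcases hmono with h | h | h <;> split_ifs <;> simp_all <;> norm_num

end Cut

def c4BlockAdj (a b : ℕ) : Prop := a = b ∨ (a + 1) % 4 = b ∨ (b + 1) % 4 = a

instance : DecidableRel c4BlockAdj := fun a b => by unfold c4BlockAdj; infer_instance

theorem c4BlockAdj.symm {a b : ℕ} (h : c4BlockAdj a b) : c4BlockAdj b a := by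
  unfold c4BlockAdj at *
  tauto

def blockParity {n : ℕ} (q : ℕ) (v : Fin n) : ZMod 2 := ((v / q : ℕ) : ZMod 2)

theorem sum_fin_mul_comp_div {M : Type*} [AddCommMonoid M] (m q : ℕ) (g : ℕ → M) :
    ∑ v : Fin (m * q), g (v / q) = q • ∑ a : Fin m, g a := by
  rw [← (finProdFinEquiv (m := m) (n := q)).sum_comp, Fintype.sum_prod_type, Finset.smul_sum]
  refine Finset.sum_congr rfl fun a _ => ?_
  have hdiv : ∀ b : Fin q, (b + q * a : ℕ) / q = a := fun b => by
    rw [Nat.add_mul_div_left _ _ (Fin.pos b), Nat.div_eq_of_lt b.isLt, zero_add]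
  simp [finProdFinEquiv, hdiv]

theorem sum_cutVector_lexC4 (q : ℕ) (G : Finset (Finset (Fin (4 * q))))
    (hG : ∀ e, e ∈ G ↔ ∃ u v : Fin (4 * q), u ≠ v ∧ e = {u, v} ∧ c4BlockAdj (u / q) (v / q)) :
    ∑ e ∈ G, cutVector (blockParity q) e = -((4 * q : ℕ) : ℝ) := by
  set w : ℕ → ℕ → ℝ := fun a b =>
    if c4BlockAdj a b then (if a % 2 = b % 2 then 2 else -1) else 0
  have hw : ∑ a : Fin 4, ∑ b : Fin 4, w a b = 0 := by
    simp +decide [w, Fin.sum_univ_four, c4BlockAdj]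
    norm_num
  have hterm : ∀ u v : Fin (4 * q),
      (if u ≠ v ∧ c4BlockAdj (u / q) (v / q) then cutVector (blockParity q) {u, v} else 0) =
        w (u / q) (v / q) - if u = v then 2 else 0 := by
    intro u v
    by_cases huv : u = v
    · subst huv
      simp [w, c4BlockAdj]
    · simp [huv, w, cutVector_pair, blockParity, ZMod.natCast_eq_natCast_iff']
  have htwice : 2 • ∑ e ∈ G, cutVector (blockParity q) e = -2 * ((4 * q : ℕ) : ℝ) :=
    calc 2 • ∑ e ∈ G, cutVector (blockParity q) e
        = ∑ u : Fin (4 * q), ∑ v : Fin (4 * q), (w (u / q) (v / q) - if u = v then 2 else 0) := by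
          rw [two_nsmul_sum_eq_sum_sum_ite _ (fun _ _ => c4BlockAdj.symm) G hG]
          simp only [hterm]
      _ = q • ∑ a : Fin 4, q • ∑ b : Fin 4, w a b - ∑ _u : Fin (4 * q), 2 := by
          simp only [sum_sub_distrib, sum_ite_eq, mem_univ, if_true,
            fun u : Fin (4 * q) => sum_fin_mul_comp_div 4 q (w (u / q))]
          rw [sum_fin_mul_comp_div 4 q fun a => q • ∑ b : Fin 4, w a b]
      _ = -2 * ((4 * q : ℕ) : ℝ) := by
          rw [← smul_sum, hw]
          simp [mul_comm]
  rw [two_nsmul] at htwice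
  linarith

/-- For G = C₄ · K_{n/4} and the equatorial cut, ⟨y, 1_G⟩ = -n < 0, so G has
no fractional triangle decomposition. Vertex v lies in block `v.val / q`,
where n = 4q; A is the union of blocks 0 and 2 (blocks of even index). -/
theorem stmt_13 (n q : ℕ) (hq : 0 < q) (hn : n = 4 * q)
    (blk : Fin n → ℕ) (hblk : ∀ v : Fin n, blk v = v.val / q)
    (G : Finset (Finset (Fin n)))
    (hG : ∀ e : Finset (Fin n), e ∈ G ↔ ∃ u v : Fin n, u ≠ v ∧ e = {u, v} ∧
      (blk u = blk v ∨ (blk u + 1) % 4 = blk v ∨ (blk v + 1) % 4 = blk u))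
    (y : Finset (Fin n) → ℝ)
    (hy : ∀ e : Finset (Fin n),
      y e = if ∀ u ∈ e, ∀ v ∈ e, blk u % 2 = blk v % 2 then 2 else -1) :
    (∑ e ∈ G, y e) = -(n : ℝ) ∧
    ¬ ∃ c : Finset (Fin n) → ℝ, (∀ K, 0 ≤ c K) ∧
      ∀ e : Finset (Fin n), e.card = 2 →
        (if e ∈ G then (1 : ℝ) else 0) =
          ∑ K ∈ Finset.univ.filter (fun K : Finset (Fin n) => K.card = 3),
            c K * (if e ⊆ K then 1 else 0) := by
  subst hn
  obtain rfl : blk = fun v => v.val / q := funext hblk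
  obtain rfl : y = cutVector (blockParity q) :=
    funext fun e => by simp only [hy, cutVector, blockParity, ZMod.natCast_eq_natCast_iff']
  have hsum := sum_cutVector_lexC4 q G hG
  refine ⟨hsum, fun ⟨c, hc⟩ => ?_⟩
  have hG2 : ∀ e ∈ G, e.card = 2 := fun e he => by
    obtain ⟨u, v, huv, rfl, -⟩ := (hG e).1 he
    exact card_pair huv
  have hnonneg : 0 ≤ ∑ e ∈ G, cutVector (blockParity q) e :=
    IsFractionalTriangleDecomposition.sum_nonneg hc hG2 fun K hK =>
      cutVector_triangle_nonneg (by simp) _ hK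
  have hq' : (0 : ℝ) < q := by exact_mod_cast hq
  rw [hsum] at hnonneg
  push_cast at hnonneg
  linarith
end
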